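/- Let I ⊆ ℝ be an open interval, let h : I → ℝ be continuous, let c ∈ I and λ > 1, and set a = c + arcoth(λ) (the inverse hyperbolic cotangent of λ). Assume h(s) ≤ 0 for every s ∈ I with s ≥ c, and that sup I > a. Then there is no twice continuously differentiable function f : [c, a] → ℝ satisfying f''(s) = (−1 + (f'(s))²)·(1 − h(s)·f'(s)) for all s ∈ [c, a] with f'(c) = λ; that is, every such solution blows up before a. -/

import Mathlib

/-!
Write `g = f'`, so `g' = (g² - 1)(1 - h g)`. Since `h ≤ 0`, `g' > 0` wherever `g = λ > 1`, so `g`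
never drops below `λ` and stays in the domain of `arcoth`. There `arcoth' y = 1 / (1 - y²)`, hence
`(arcoth ∘ g)' = -(1 - h g) ≤ -1`: the quantity `arcoth (g s) + s` is nonincreasing, so
`arcoth (g a) ≤ arcoth λ + c - a = 0`, contradicting `arcoth > 0` on `(1, ∞)`.
-/

open Set Filter

noncomputable def arcoth (x : ℝ) : ℝ := (1 / 2) * Real.log ((x + 1) / (x - 1))

lemma arcoth_pos {x : ℝ} (hx : 1 < x) : 0 < arcoth x := by
  have hquot : 1 < (x + 1) / (x - 1) := by
    rw [lt_div_iff₀ (by linarith)]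
    linarith
  exact mul_pos (by norm_num) (Real.log_pos hquot)

lemma hasDerivAt_arcoth {x : ℝ} (hx : 1 < x) : HasDerivAt arcoth (1 / (1 - x ^ 2)) x := by
  have hsub : x - 1 ≠ 0 := by linarith
  have hadd : x + 1 ≠ 0 := by linarith
  have hquot := ((hasDerivAt_id' x).add_const 1).div ((hasDerivAt_id' x).sub_const 1) hsub
  refine ((hquot.log (div_ne_zero hadd hsub)).const_mul (1 / 2)).congr_deriv ?_
  have : 1 - x ^ 2 ≠ 0 := by nlinarith
  simp only [Pi.div_apply]
  field_simp
  ring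

section Riccati

variable {g h : ℝ → ℝ} {c b : ℝ}
  (hg : ∀ s ∈ Icc c b, HasDerivWithinAt g ((-1 + g s ^ 2) * (1 - h s * g s)) (Icc c b) s)
  (hh : ∀ s ∈ Icc c b, h s ≤ 0)
include hg hh

lemma le_of_hasDerivWithinAt_riccati (hgc : 1 < g c) : ∀ s ∈ Icc c b, g c ≤ g s := by
  intro s hs
  have hbarrier := image_le_of_deriv_right_lt_deriv_boundary (f := -g) (B := fun _ ↦ -g c)
    (B' := 0) (fun s hs ↦ (hg s hs).continuousWithinAt.neg)
    (fun s hs ↦ ((hg s (Ico_subset_Icc_self hs)).neg).mono_of_mem_nhdsWithin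
      (Icc_mem_nhdsGE_of_mem hs))
    le_rfl (fun _ ↦ hasDerivAt_const _ _)
    (by
      intro s hs hgs
      have hgs : g s = g c := neg_inj.1 hgs
      have hhs := hh s (Ico_subset_Icc_self hs)
      simp only [Pi.zero_apply, neg_neg_iff_pos, hgs]
      exact mul_pos (by nlinarith) (by nlinarith))
    hs
  simpa using hbarrier

lemma arcoth_add_le_of_riccati (hgc : 1 < g c) (hcb : c ≤ b) :
    arcoth (g b) + b ≤ arcoth (g c) + c := by
  have hF : ∀ s ∈ Icc c b,
      HasDerivWithinAt (fun s ↦ arcoth (g s) + s) (h s * g s) (Icc c b) s := by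
    intro s hs
    have hgs : 1 < g s := hgc.trans_le (le_of_hasDerivWithinAt_riccati hg hh hgc s hs)
    refine (((hasDerivAt_arcoth hgs).comp_hasDerivWithinAt s (hg s hs)).add
      (hasDerivWithinAt_id s _)).congr_deriv ?_
    have : 1 - g s ^ 2 ≠ 0 := by nlinarith
    field_simp
    ring
  have hanti : AntitoneOn (fun s ↦ arcoth (g s) + s) (Icc c b) := by
    refine antitoneOn_of_hasDerivWithinAt_nonpos (convex_Icc c b)
      (fun s hs ↦ (hF s hs).continuousWithinAt)
      (fun s hs ↦ (hF s (interior_subset hs)).mono interior_subset) fun s hs ↦ ?_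
    have hs := interior_subset hs
    exact mul_nonpos_of_nonpos_of_nonneg (hh s hs)
      (by linarith [le_of_hasDerivWithinAt_riccati hg hh hgc s hs])
  exact hanti (left_mem_Icc.2 hcb) (right_mem_Icc.2 hcb) hcb

end Riccati

theorem blow_up_case_eps_one_epstilde_neg_one_general
    (I : Set ℝ) (hIconn : I.OrdConnected)
    (h : ℝ → ℝ)
    (c : ℝ) (hc : c ∈ I) (l : ℝ) (hl : 1 < l)
    (a : ℝ) (ha : a = c + arcoth l)
    (hneg : ∀ s ∈ I, c ≤ s → h s ≤ 0)
    (hsup : ∃ s ∈ I, a < s) :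
    ¬ ∃ f : ℝ → ℝ,
      ContDiffOn ℝ 2 f (Set.Icc c a) ∧
      (∀ s ∈ Set.Icc c a,
        derivWithin (derivWithin f (Set.Icc c a)) (Set.Icc c a) s =
          (-1 + (derivWithin f (Set.Icc c a) s) ^ 2) *
            (1 - h s * derivWithin f (Set.Icc c a) s)) ∧
      derivWithin f (Set.Icc c a) c = l := by
  rintro ⟨f, hf, hode, hfc⟩
  have hca : c < a := by linarith [arcoth_pos hl]
  have hJI : Icc c a ⊆ I := by
    obtain ⟨s₀, hs₀, has₀⟩ := hsup
    exact fun s hs ↦ hIconn.out hc hs₀ ⟨hs.1, hs.2.trans has₀.le⟩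
  have hg : ∀ s ∈ Icc c a, HasDerivWithinAt (derivWithin f (Icc c a))
      ((-1 + derivWithin f (Icc c a) s ^ 2) * (1 - h s * derivWithin f (Icc c a) s))
      (Icc c a) s := by
    intro s hs
    rw [← hode s hs]
    exact ((hf.derivWithin (uniqueDiffOn_Icc hca) (by norm_num)).differentiableOn
      one_ne_zero s hs).hasDerivWithinAt
  have hh : ∀ s ∈ Icc c a, h s ≤ 0 := fun s hs ↦ hneg s (hJI hs) hs.1
  have hgc : 1 < derivWithin f (Icc c a) c := hfc ▸ hl
  have hdecay := arcoth_add_le_of_riccati hg hh hgc hca.le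
  have hga := le_of_hasDerivWithinAt_riccati hg hh hgc a (right_mem_Icc.2 hca.le)
  rw [hfc] at hdecay
  linarith [arcoth_pos (hgc.trans_le hga)]

/-- Finite time blow up for `f'' = (−1 + (f')²)(1 − h f')` with
`f'(c) = λ > 1` and `h ≤ 0` on `I ∩ [c, ∞)`: no `C²` solution exists on all of
`[c, a]` where `a = c + arcoth(λ)`. -/
theorem blow_up_case_eps_one_epstilde_neg_one
    (I : Set ℝ) (hIopen : IsOpen I) (hIconn : I.OrdConnected)
    (h : ℝ → ℝ) (hcont : ContinuousOn h I)
    (c : ℝ) (hc : c ∈ I) (l : ℝ) (hl : 1 < l)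
    (a : ℝ) (ha : a = c + arcoth l)
    (hneg : ∀ s ∈ I, c ≤ s → h s ≤ 0)
    (hsup : ∃ s ∈ I, a < s) :
    ¬ ∃ f : ℝ → ℝ,
      ContDiffOn ℝ 2 f (Set.Icc c a) ∧
      (∀ s ∈ Set.Icc c a,
        derivWithin (derivWithin f (Set.Icc c a)) (Set.Icc c a) s =
          (-1 + (derivWithin f (Set.Icc c a) s) ^ 2) *
            (1 - h s * derivWithin f (Set.Icc c a) s)) ∧
      derivWithin f (Set.Icc c a) c = l :=
  blow_up_case_eps_one_epstilde_neg_one_general I hIconn h c hc l hl a ha hneg hsup
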